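/- arXiv:2307.13372 — 8 statements merged into one kernel-verified Lean document; each statement's English description precedes it below -/
import Mathlib

section
/- For a deterministic finite-horizon MDP with a fixed initial state — i.e., ρ is the indicator of a single state s₀, and there is a map T : Fin H → S → A → S such that P h s a s' = 1 if s' = T h s a and P h s a s' = 0 otherwise — and for an arbitrary set function F, the optimal Markovian policy achieves the same value as the optimal non-Markovian policy: the supremum of J(π) over all Markovian policies π equals the supremum of J(π) over all history-dependent policies π, and both suprema are attained. -/
open Finset

/-- A trajectory: states at times `0,…,H` and actions at times `0,…,H−1`. -/
abbrev Traj (S A : Type) (H : ℕ) : Type := (Fin (H + 1) → S) × (Fin H → A)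

variable {S A : Type} {H : ℕ}

/-- The set of time-augmented states visited by `τ` up to step `j`. -/
def visitedUpTo [DecidableEq S] (τ : Traj S A H) (j : Fin (H + 1)) :
    Finset (Fin (H + 1) × S) :=
  (Finset.univ.filter fun l => l ≤ j).image fun l => (l, τ.1 l)

/-- The set of time-augmented states visited by the whole trajectory `τ`. -/
def visitedAll [DecidableEq S] (τ : Traj S A H) : Finset (Fin (H + 1) × S) :=
  Finset.univ.image fun l => (l, τ.1 l)

/-- Probability of trajectory `τ` under a Markovian policy table `π`. -/
def trajProb (ρ : S → ℝ) (P : Fin H → S → A → S → ℝ) (π : Fin H → S → A → ℝ)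
    (τ : Traj S A H) : ℝ :=
  ρ (τ.1 0) *
    ∏ h : Fin H, π h (τ.1 h.castSucc) (τ.2 h) * P h (τ.1 h.castSucc) (τ.2 h) (τ.1 h.succ)

/-- The objective `J(π) = ∑_τ f(τ;π) · F(τ)`. -/
def Jobj [Fintype S] [Fintype A] [DecidableEq S] (ρ : S → ℝ) (P : Fin H → S → A → S → ℝ)
    (F : Finset (Fin (H + 1) × S) → ℝ) (π : Fin H → S → A → ℝ) : ℝ :=
  ∑ τ : Traj S A H, trajProb ρ P π τ * F (visitedAll τ)

/-- `π` is a (stochastic) Markovian policy. -/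
def IsMarkovPolicy [Fintype A] (π : Fin H → S → A → ℝ) : Prop :=
  (∀ h s a, 0 ≤ π h s a) ∧ ∀ h s, ∑ a : A, π h s a = 1

/-- `π` is a deterministic Markovian policy. -/
def IsDetMarkovPolicy [Fintype A] (π : Fin H → S → A → ℝ) : Prop :=
  IsMarkovPolicy π ∧ ∀ h s, ∃ a, π h s a = 1

/-- A history-dependent policy: at step `h`, given the prefix
`((s 0, a 0), …, (s (h−1), a (h−1)), s h)`, a weight for each action. -/
abbrev HistPolicy (S A : Type) (H : ℕ) : Type :=
  (h : Fin H) → ((Fin h.1 → S × A) × S) → A → ℝ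

/-- The prefix of trajectory `τ` up to step `h`. -/
def prefixOf (τ : Traj S A H) (h : Fin H) : (Fin h.1 → S × A) × S :=
  (fun l => (τ.1 ⟨l.1, by have := l.2; have := h.2; omega⟩,
             τ.2 ⟨l.1, by have := l.2; have := h.2; omega⟩),
   τ.1 h.castSucc)

/-- Probability of trajectory `τ` under a history-dependent policy `π`. -/
def trajProbHist (ρ : S → ℝ) (P : Fin H → S → A → S → ℝ) (π : HistPolicy S A H)
    (τ : Traj S A H) : ℝ :=
  ρ (τ.1 0) *
    ∏ h : Fin H, π h (prefixOf τ h) (τ.2 h) * P h (τ.1 h.castSucc) (τ.2 h) (τ.1 h.succ)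

/-- The objective for history-dependent policies. -/
def JobjHist [Fintype S] [Fintype A] [DecidableEq S] (ρ : S → ℝ)
    (P : Fin H → S → A → S → ℝ) (F : Finset (Fin (H + 1) × S) → ℝ)
    (π : HistPolicy S A H) : ℝ :=
  ∑ τ : Traj S A H, trajProbHist ρ P π τ * F (visitedAll τ)

/-- `π` is a (stochastic) history-dependent policy. -/
def IsHistPolicy [Fintype A] (π : HistPolicy S A H) : Prop :=
  (∀ h pre a, 0 ≤ π h pre a) ∧ ∀ h pre, ∑ a : A, π h pre a = 1

/-- `π` is a deterministic history-dependent policy. -/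
def IsDetHistPolicy [Fintype A] (π : HistPolicy S A H) : Prop :=
  IsHistPolicy π ∧ ∀ h pre, ∃ a, π h pre a = 1

/-- state sequence generated by action sequence `a` from `s₀` under dynamics `T`. -/
def stSeq (s₀ : S) (T : Fin H → S → A → S) (a : Fin H → A) : ℕ → S
  | 0 => s₀
  | n + 1 => if h : n < H then T ⟨n, h⟩ (stSeq s₀ T a n) (a ⟨n, h⟩) else s₀

lemma stSeq_congr (s₀ : S) (T : Fin H → S → A → S) {a a' : Fin H → A} :
    ∀ n, (∀ l : Fin H, l.1 < n → a l = a' l) → stSeq s₀ T a n = stSeq s₀ T a' n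
  | 0, _ => rfl
  | n + 1, hag => by
    simp only [stSeq]
    split
    · next h =>
      rw [stSeq_congr s₀ T n (fun l hl => hag l (by omega)), hag ⟨n, h⟩ (Nat.lt_succ_self n)]
    · rfl

def gen (s₀ : S) (T : Fin H → S → A → S) (a : Fin H → A) : Traj S A H :=
  (fun i => stSeq s₀ T a i.1, a)

lemma prefix_congr (s₀ : S) (T : Fin H → S → A → S) {a a' : Fin H → A} (h : Fin H)
    (hag : ∀ l : Fin H, l.1 < h.1 → a l = a' l) :
    prefixOf (gen s₀ T a) h = prefixOf (gen s₀ T a') h := by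
  unfold prefixOf gen
  refine Prod.ext ?_ ?_
  · funext l
    refine Prod.ext ?_ ?_
    · exact stSeq_congr s₀ T l.1 (fun m hm => hag m (by have := l.2; omega))
    · exact hag ⟨l.1, by have := l.2; have := h.2; omega⟩ l.2
  · exact stSeq_congr s₀ T h.1 hag

lemma sum_prod_one [Fintype A] [Nonempty A] :
    ∀ (n : ℕ) (g : Fin n → (Fin n → A) → A → ℝ),
      (∀ (h : Fin n) (a a' : Fin n → A), (∀ i : Fin n, i.1 < h.1 → a i = a' i) → g h a = g h a') →
      (∀ h a, ∑ b : A, g h a b = 1) →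
      ∑ a : Fin n → A, ∏ h, g h a (a h) = 1
  | 0, g, _, _ => by simp
  | n + 1, g, hdep, hsum => by
    rw [← Equiv.sum_comp (Fin.consEquiv (fun _ : Fin (n+1) => A))
      (fun a => ∏ h, g h a (a h)), Fintype.sum_prod_type]
    have key : ∀ x : A, ∑ a' : Fin n → A,
        ∏ h, g h (Fin.consEquiv _ (x, a')) ((Fin.consEquiv _ (x, a') : Fin (n+1) → A) h)
        = g 0 (fun _ => Classical.arbitrary A) x := by
      intro x
      have : ∀ a' : Fin n → A,
          ∏ h, g h (Fin.consEquiv _ (x, a')) ((Fin.consEquiv _ (x, a') : Fin (n+1) → A) h)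
          = g 0 (fun _ => Classical.arbitrary A) x *
            ∏ h : Fin n, g h.succ (Fin.cons x a') (a' h) := by
        intro a'
        have e : (Fin.consEquiv (fun _ : Fin (n+1) => A) (x, a') : Fin (n+1) → A)
            = Fin.cons x a' := rfl
        rw [e, Fin.prod_univ_succ]
        simp only [Fin.cons_zero, Fin.cons_succ]
        congr 1
        exact congrFun (hdep 0 (Fin.cons x a') (fun _ => Classical.arbitrary A)
          (fun i hi => by simp at hi)) x
      simp only [this]
      rw [← Finset.mul_sum]
      rw [sum_prod_one n (fun h a' b => g h.succ (Fin.cons x a') b) ?_ ?_, mul_one]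
      · intro h a a' hag
        refine hdep h.succ _ _ (fun i => ?_)
        induction i using Fin.cases with
        | zero => intro _; simp
        | succ j =>
          intro hj
          rw [Fin.cons_succ, Fin.cons_succ]
          refine hag j ?_
          simp only [Fin.val_succ] at hj
          omega
      · intro h a; exact hsum h.succ _
    calc ∑ x : A, ∑ a' : Fin n → A, _ = ∑ x : A, g 0 (fun _ => Classical.arbitrary A) x :=
          Finset.sum_congr rfl fun x _ => key x
      _ = 1 := hsum 0 _

lemma trajProbHist_gen [Fintype A] [DecidableEq S] (s₀ : S) (T : Fin H → S → A → S)
    (π : HistPolicy S A H) (a : Fin H → A) :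
    trajProbHist (fun s => if s = s₀ then (1:ℝ) else 0)
      (fun h s a s' => if s' = T h s a then (1:ℝ) else 0) π (gen s₀ T a)
      = ∏ h, π h (prefixOf (gen s₀ T a) h) (a h) := by
  unfold trajProbHist
  beta_reduce
  have h0 : (gen s₀ T a).1 0 = s₀ := by
    show stSeq s₀ T a (0 : Fin (H+1)).1 = s₀
    simp [stSeq]
  rw [h0, if_pos rfl, one_mul]
  refine Finset.prod_congr rfl fun h _ => ?_
  have hstep : (gen s₀ T a).1 h.succ = T h ((gen s₀ T a).1 h.castSucc) ((gen s₀ T a).2 h) := by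
    show stSeq s₀ T a (h.1 + 1) = T h (stSeq s₀ T a h.1) (a h)
    simp [stSeq, h.2]
  rw [hstep, if_pos rfl, mul_one]
  rfl

lemma eq_gen_of_ne_zero [Fintype A] [DecidableEq S] (s₀ : S) (T : Fin H → S → A → S)
    (π : HistPolicy S A H) (τ : Traj S A H)
    (hne : trajProbHist (fun s => if s = s₀ then (1:ℝ) else 0)
      (fun h s a s' => if s' = T h s a then (1:ℝ) else 0) π τ ≠ 0) :
    τ.1 = (gen s₀ T τ.2).1 := by
  unfold trajProbHist at hne
  rw [mul_ne_zero_iff] at hne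
  obtain ⟨hρ0, hprod⟩ := hne
  have h0 : τ.1 0 = s₀ := by by_contra h; exact hρ0 (if_neg h)
  have hstep : ∀ h : Fin H, τ.1 h.succ = T h (τ.1 h.castSucc) (τ.2 h) := by
    intro h
    have h2 := Finset.prod_ne_zero_iff.mp hprod h (mem_univ h)
    rw [mul_ne_zero_iff] at h2
    by_contra hc
    exact h2.2 (if_neg hc)
  suffices hh : ∀ n (hn : n < H + 1), τ.1 ⟨n, hn⟩ = stSeq s₀ T τ.2 n by
    funext i
    exact hh i.1 i.2
  intro n
  induction n with
  | zero =>
    intro hn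
    have e : (⟨0, hn⟩ : Fin (H+1)) = 0 := by ext; simp
    rw [e, h0]
    rfl
  | succ m ih =>
    intro hn
    have hm : m < H := by omega
    calc τ.1 ⟨m+1, hn⟩ = τ.1 (⟨m, hm⟩ : Fin H).succ := rfl
      _ = T ⟨m, hm⟩ (τ.1 (⟨m, hm⟩ : Fin H).castSucc) (τ.2 ⟨m, hm⟩) := hstep _
      _ = T ⟨m, hm⟩ (stSeq s₀ T τ.2 m) (τ.2 ⟨m, hm⟩) := by
          rw [show (⟨m, hm⟩ : Fin H).castSucc = (⟨m, by omega⟩ : Fin (H+1)) from rfl,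
            ih (by omega)]
      _ = stSeq s₀ T τ.2 (m+1) := by
          simp only [stSeq]
          rw [dif_pos hm]

lemma JobjHist_eq_sum [Fintype S] [Fintype A] [DecidableEq S] (s₀ : S)
    (T : Fin H → S → A → S) (F : Finset (Fin (H + 1) × S) → ℝ) (π : HistPolicy S A H) :
    JobjHist (fun s => if s = s₀ then (1:ℝ) else 0)
      (fun h s a s' => if s' = T h s a then (1:ℝ) else 0) F π
      = ∑ a : Fin H → A,
          (∏ h, π h (prefixOf (gen s₀ T a) h) (a h)) * F (visitedAll (gen s₀ T a)) := by
  unfold JobjHist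
  rw [Fintype.sum_prod_type, Finset.sum_comm]
  refine Finset.sum_congr rfl fun a _ => ?_
  rw [Finset.sum_eq_single (fun i : Fin (H+1) => stSeq s₀ T a i.1)]
  · rw [show ((fun i : Fin (H+1) => stSeq s₀ T a i.1, a) : Traj S A H) = gen s₀ T a from rfl,
      trajProbHist_gen]
  · intro s _ hs
    have hz : trajProbHist (fun s => if s = s₀ then (1:ℝ) else 0)
        (fun h s a s' => if s' = T h s a then (1:ℝ) else 0) π (s, a) = 0 := by
      by_contra hc
      exact hs (eq_gen_of_ne_zero s₀ T π (s, a) hc)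
    rw [hz, zero_mul]
  · intro hu
    exact absurd (mem_univ _) hu

/-- For a deterministic finite-horizon MDP with a fixed initial state,
the optimal Markovian policy achieves the same value as the optimal non-Markovian
(history-dependent) policy, and both suprema are attained. -/
theorem deterministic_mdp_markov_eq_nonMarkov
    (S A : Type) [Fintype S] [Fintype A] [DecidableEq S] [Nonempty S] [Nonempty A]
    (H : ℕ) (hH : 1 ≤ H)
    (s₀ : S) (T : Fin H → S → A → S)
    (ρ : S → ℝ) (hρ : ρ = fun s => if s = s₀ then (1 : ℝ) else 0)
    (P : Fin H → S → A → S → ℝ)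
    (hP : P = fun h s a s' => if s' = T h s a then (1 : ℝ) else 0)
    (F : Finset (Fin (H + 1) × S) → ℝ) :
    ∃ (πM : Fin H → S → A → ℝ) (πN : HistPolicy S A H),
      IsMarkovPolicy πM ∧ IsHistPolicy πN ∧
      (∀ π : Fin H → S → A → ℝ, IsMarkovPolicy π → Jobj ρ P F π ≤ Jobj ρ P F πM) ∧
      (∀ π : HistPolicy S A H, IsHistPolicy π → JobjHist ρ P F π ≤ JobjHist ρ P F πN) ∧
      Jobj ρ P F πM = JobjHist ρ P F πN := by
  subst hρ hP
  obtain ⟨astar, -, hmax⟩ := Finset.exists_max_image (Finset.univ : Finset (Fin H → A))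
    (fun a => F (visitedAll (gen s₀ T a))) ⟨Classical.arbitrary _, mem_univ _⟩
  classical
  set πM : Fin H → S → A → ℝ := fun h _ a => if a = astar h then 1 else 0 with hπM
  set πN : HistPolicy S A H := fun h _ a => if a = astar h then 1 else 0 with hπN
  have hMpol : IsMarkovPolicy πM := by
    constructor
    · intro h s a; dsimp [πM]; split <;> norm_num
    · intro h s; simp [πM]
  have hNpol : IsHistPolicy πN := by
    constructor
    · intro h pre a; dsimp [πN]; split <;> norm_num
    · intro h pre; simp [πN]
  have hlift : ∀ π : Fin H → S → A → ℝ,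
      Jobj (fun s => if s = s₀ then (1:ℝ) else 0)
        (fun h s a s' => if s' = T h s a then (1:ℝ) else 0) F π
      = JobjHist (fun s => if s = s₀ then (1:ℝ) else 0)
        (fun h s a s' => if s' = T h s a then (1:ℝ) else 0) F
        (fun h pre a => π h pre.2 a) := fun _ => rfl
  have hNval : JobjHist (fun s => if s = s₀ then (1:ℝ) else 0)
      (fun h s a s' => if s' = T h s a then (1:ℝ) else 0) F πN
      = F (visitedAll (gen s₀ T astar)) := by
    rw [JobjHist_eq_sum]
    rw [Finset.sum_eq_single astar]
    · simp [πN]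
    · intro a _ ha
      have : ∃ h, a h ≠ astar h := by
        by_contra hc
        push_neg at hc
        exact ha (funext hc)
      obtain ⟨h, hne⟩ := this
      rw [Finset.prod_eq_zero (mem_univ h), zero_mul]
      dsimp [πN]
      rw [if_neg hne]
    · intro hu; exact absurd (mem_univ _) hu
  have hub : ∀ π : HistPolicy S A H, IsHistPolicy π →
      JobjHist (fun s => if s = s₀ then (1:ℝ) else 0)
        (fun h s a s' => if s' = T h s a then (1:ℝ) else 0) F π
      ≤ F (visitedAll (gen s₀ T astar)) := by
    intro π hπ
    rw [JobjHist_eq_sum]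
    have hw1 : ∑ a : Fin H → A, ∏ h, π h (prefixOf (gen s₀ T a) h) (a h) = 1 :=
      sum_prod_one H (fun h a b => π h (prefixOf (gen s₀ T a) h) b)
        (fun h a a' hag => by beta_reduce; rw [prefix_congr s₀ T h hag])
        (fun h a => hπ.2 h _)
    calc ∑ a : Fin H → A,
          (∏ h, π h (prefixOf (gen s₀ T a) h) (a h)) * F (visitedAll (gen s₀ T a))
        ≤ ∑ a : Fin H → A,
          (∏ h, π h (prefixOf (gen s₀ T a) h) (a h)) * F (visitedAll (gen s₀ T astar)) := by
          refine Finset.sum_le_sum fun a _ => ?_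
          exact mul_le_mul_of_nonneg_left (hmax a (mem_univ a))
            (Finset.prod_nonneg fun h _ => hπ.1 h _ _)
      _ = F (visitedAll (gen s₀ T astar)) := by
          rw [← Finset.sum_mul, hw1, one_mul]
  have hMval : Jobj (fun s => if s = s₀ then (1:ℝ) else 0)
      (fun h s a s' => if s' = T h s a then (1:ℝ) else 0) F πM
      = JobjHist (fun s => if s = s₀ then (1:ℝ) else 0)
        (fun h s a s' => if s' = T h s a then (1:ℝ) else 0) F πN := by
    rw [hlift πM]
  refine ⟨πM, πN, hMpol, hNpol, ?_, ?_, hMval⟩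
  · intro π hπ
    rw [hlift π, hMval, hNval]
    exact hub _ ⟨fun h pre a => hπ.1 h _ a, fun h pre => hπ.2 h _⟩
  · intro π hπ
    rw [hNval]
    exact hub π hπ
end

section
/- For every finite-horizon MDP and every set function F, there exists a deterministic Markovian policy π* such that J(π*) ≥ J(π) for every Markovian policy π; that is, among Markovian policies there is an optimal one that is deterministic. -/
open Finset

variable {S A : Type} {H : ℕ}

section AuxOpt

variable {S A : Type} {H : ℕ}

/-- Deterministic policy table induced by an action choice `d`. -/
noncomputable def detPol (d : Fin H → S → A) : Fin H → S → A → ℝ :=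
  fun h s a => by classical exact if a = d h s then 1 else 0

/-- Weight of the deterministic choice `d` under the stochastic policy `π`. -/
noncomputable def wtPol [Fintype S] (π : Fin H → S → A → ℝ) (d : Fin H → S → A) : ℝ :=
  ∏ h : Fin H, ∏ s : S, π h s (d h s)

lemma sum_fn_prod {ι β : Type} [DecidableEq ι] [Fintype ι] [Fintype β] (f : ι → β → ℝ) :
    ∑ g : ι → β, ∏ i, f i (g i) = ∏ i, ∑ b : β, f i b := by
  classical
  rw [Finset.prod_univ_sum (fun _ => Finset.univ) f, Fintype.piFinset_univ]

lemma detPol_isDet [Fintype A] (d : Fin H → S → A) : IsDetMarkovPolicy (detPol d) := by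
  classical
  refine ⟨⟨fun h s a => ?_, fun h s => ?_⟩, fun h s => ⟨d h s, ?_⟩⟩
  · simp only [detPol]; split <;> norm_num
  · simp [detPol]
  · simp [detPol]

lemma wtPol_nonneg [Fintype S] [Fintype A] [DecidableEq S] {π : Fin H → S → A → ℝ} (hπ : IsMarkovPolicy π)
    (d : Fin H → S → A) : 0 ≤ wtPol π d :=
  Finset.prod_nonneg fun h _ => Finset.prod_nonneg fun s _ => hπ.1 h s (d h s)

lemma wtPol_sum_one [Fintype S] [Fintype A] [DecidableEq S] {π : Fin H → S → A → ℝ}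
    (hπ : IsMarkovPolicy π) : ∑ d : Fin H → S → A, wtPol π d = 1 := by
  classical
  unfold wtPol
  rw [sum_fn_prod (fun (h : Fin H) (g : S → A) => ∏ s : S, π h s (g s))]
  have : ∀ h : Fin H, ∑ g : S → A, ∏ s : S, π h s (g s) = 1 := by
    intro h
    rw [sum_fn_prod (fun (s : S) (a : A) => π h s a)]
    simp [hπ.2 h]
  simp [this]

lemma trajProb_decomp [Fintype S] [Fintype A] [DecidableEq S] (ρ : S → ℝ) (P : Fin H → S → A → S → ℝ)
    {π : Fin H → S → A → ℝ} (hπ : IsMarkovPolicy π) (τ : Traj S A H) :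
    ∑ d : Fin H → S → A, wtPol π d * trajProb ρ P (detPol d) τ = trajProb ρ P π τ := by
  classical
  set c : Fin H → S → A → ℝ := fun h s a =>
    if s = τ.1 h.castSucc then (if τ.2 h = a then π h s a else 0) else π h s a with hc_def
  have hc : ∀ (h : Fin H) (g : S → A),
      ∏ s, c h s (g s) =
        (if τ.2 h = g (τ.1 h.castSucc) then (1 : ℝ) else 0) * ∏ s, π h s (g s) := by
    intro h g
    rw [← Finset.mul_prod_erase Finset.univ (fun s => c h s (g s))
        (Finset.mem_univ (τ.1 h.castSucc)),
      ← Finset.mul_prod_erase Finset.univ (fun s => π h s (g s))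
        (Finset.mem_univ (τ.1 h.castSucc))]
    have hrest : ∀ s ∈ Finset.univ.erase (τ.1 h.castSucc), c h s (g s) = π h s (g s) := by
      intro s hs
      simp [hc_def, (Finset.mem_erase.mp hs).1]
    rw [Finset.prod_congr rfl hrest]
    have : c h (τ.1 h.castSucc) (g (τ.1 h.castSucc)) =
        (if τ.2 h = g (τ.1 h.castSucc) then (1 : ℝ) else 0) *
          π h (τ.1 h.castSucc) (g (τ.1 h.castSucc)) := by
      simp only [hc_def, if_pos rfl]
      split <;> simp
    rw [this]; ring
  have step : ∀ d : Fin H → S → A, wtPol π d * trajProb ρ P (detPol d) τ =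
      ρ (τ.1 0) * (∏ h, P h (τ.1 h.castSucc) (τ.2 h) (τ.1 h.succ)) *
        ∏ h, ∏ s, c h s (d h s) := by
    intro d
    simp only [wtPol, trajProb, detPol]
    rw [Finset.prod_congr rfl fun h _ => hc h (d h)]
    simp only [Finset.prod_mul_distrib]
    ring
  rw [Finset.sum_congr rfl fun d _ => step d, ← Finset.mul_sum]
  rw [sum_fn_prod (fun (h : Fin H) (g : S → A) => ∏ s, c h s (g s))]
  have hinner : ∀ h : Fin H, ∑ g : S → A, ∏ s, c h s (g s) =
      π h (τ.1 h.castSucc) (τ.2 h) := by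
    intro h
    rw [sum_fn_prod (fun (s : S) (a : A) => c h s a)]
    have : ∀ s : S, ∑ a : A, c h s a =
        if s = τ.1 h.castSucc then π h (τ.1 h.castSucc) (τ.2 h) else 1 := by
      intro s
      by_cases hs : s = τ.1 h.castSucc
      · subst hs
        simp only [hc_def, if_pos rfl]
        rw [Finset.sum_ite_eq Finset.univ (τ.2 h) (fun a => π h (τ.1 h.castSucc) a)]
        simp
      · simp [hc_def, hs, hπ.2 h s]
    rw [Finset.prod_congr rfl fun s _ => this s]
    rw [Finset.prod_ite_eq' Finset.univ (τ.1 h.castSucc)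
      (fun _ => π h (τ.1 h.castSucc) (τ.2 h))]
    simp
  rw [Finset.prod_congr rfl fun h _ => hinner h]
  simp only [trajProb, Finset.prod_mul_distrib]
  ring

lemma Jobj_decomp [Fintype S] [Fintype A] [DecidableEq S] (ρ : S → ℝ)
    (P : Fin H → S → A → S → ℝ) (F : Finset (Fin (H + 1) × S) → ℝ)
    {π : Fin H → S → A → ℝ} (hπ : IsMarkovPolicy π) :
    Jobj ρ P F π = ∑ d : Fin H → S → A, wtPol π d * Jobj ρ P F (detPol d) := by
  unfold Jobj
  calc ∑ τ : Traj S A H, trajProb ρ P π τ * F (visitedAll τ)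
      = ∑ τ : Traj S A H, (∑ d : Fin H → S → A,
          wtPol π d * trajProb ρ P (detPol d) τ) * F (visitedAll τ) := by
        exact Finset.sum_congr rfl fun τ _ => by rw [trajProb_decomp ρ P hπ τ]
    _ = ∑ d : Fin H → S → A, wtPol π d *
          ∑ τ : Traj S A H, trajProb ρ P (detPol d) τ * F (visitedAll τ) := by
        simp only [Finset.sum_mul, Finset.mul_sum]
        rw [Finset.sum_comm]
        simp only [mul_assoc]

end AuxOpt

/-- For every finite-horizon MDP and every set function `F`, among the
Markovian policies there is an optimal one that is deterministic. -/
theorem exists_optimal_deterministic_markov_policy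
    (S A : Type) [Fintype S] [Fintype A] [DecidableEq S] [Nonempty S] [Nonempty A]
    (H : ℕ) (hH : 1 ≤ H)
    (ρ : S → ℝ) (hρ0 : ∀ s, 0 ≤ ρ s) (hρ1 : ∑ s : S, ρ s = 1)
    (P : Fin H → S → A → S → ℝ)
    (hP0 : ∀ h s a s', 0 ≤ P h s a s') (hP1 : ∀ h s a, ∑ s' : S, P h s a s' = 1)
    (F : Finset (Fin (H + 1) × S) → ℝ) :
    ∃ πstar : Fin H → S → A → ℝ, IsDetMarkovPolicy πstar ∧
      ∀ π : Fin H → S → A → ℝ, IsMarkovPolicy π → Jobj ρ P F π ≤ Jobj ρ P F πstar := by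
  classical
  obtain ⟨dstar, hdstar⟩ := Finite.exists_max (fun d : Fin H → S → A => Jobj ρ P F (detPol d))
  refine ⟨detPol dstar, detPol_isDet dstar, fun π hπ => ?_⟩
  rw [Jobj_decomp ρ P F hπ]
  calc ∑ d : Fin H → S → A, wtPol π d * Jobj ρ P F (detPol d)
      ≤ ∑ d : Fin H → S → A, wtPol π d * Jobj ρ P F (detPol dstar) :=
        Finset.sum_le_sum fun d _ =>
          mul_le_mul_of_nonneg_left (hdstar d) (wtPol_nonneg hπ d)
    _ = Jobj ρ P F (detPol dstar) := by
        rw [← Finset.sum_mul, wtPol_sum_one hπ, one_mul]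
end

section
/- For every finite-horizon MDP and every set function F, there exists a deterministic history-dependent policy π* such that J(π*) ≥ J(π) for every history-dependent policy π; that is, among history-dependent policies there is an optimal one that is deterministic. -/
open Finset

variable {S A : Type} {H : ℕ}

section AuxDet

variable {S A : Type} {H : ℕ} [Fintype S] [Fintype A] [DecidableEq S] [DecidableEq A]

/-- Index type for all (step, prefix) pairs. -/
abbrev Idx (S A : Type) (H : ℕ) : Type := (h : Fin H) × ((Fin h.1 → S × A) × S)

/-- Deterministic policy induced by a choice function. -/
def detOf (d : Idx S A H → A) : HistPolicy S A H :=
  fun h pre a => if a = d ⟨h, pre⟩ then 1 else 0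

lemma detOf_isDet (d : Idx S A H → A) : IsDetHistPolicy (detOf d) := by
  refine ⟨⟨fun h pre a => ?_, fun h pre => ?_⟩, fun h pre => ⟨d ⟨h, pre⟩, by simp [detOf]⟩⟩
  · unfold detOf; split <;> norm_num
  · simp [detOf]

lemma sum_weights (π : HistPolicy S A H) (hπ1 : ∀ h pre, ∑ a : A, π h pre a = 1) :
    ∑ d : Idx S A H → A, ∏ i : Idx S A H, π i.1 i.2 (d i) = 1 := by
  have := Finset.prod_univ_sum (fun _ : Idx S A H => (Finset.univ : Finset A))
    (fun i a => π i.1 i.2 a)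
  rw [Fintype.piFinset_univ] at this
  rw [← this]
  simp [hπ1]

lemma key_decomp (π : HistPolicy S A H) (hπ1 : ∀ h pre, ∑ a : A, π h pre a = 1)
    (τ : Traj S A H) :
    ∑ d : Idx S A H → A, (∏ i : Idx S A H, π i.1 i.2 (d i)) *
      (∏ h : Fin H, detOf d h (prefixOf τ h) (τ.2 h))
    = ∏ h : Fin H, π h (prefixOf τ h) (τ.2 h) := by
  have step1 : ∀ d : Idx S A H → A,
      (∏ h : Fin H, detOf d h (prefixOf τ h) (τ.2 h))
      = ∏ i : Idx S A H,
          (if i.2 = prefixOf τ i.1 then detOf d i.1 i.2 (τ.2 i.1) else 1) := by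
    intro d
    rw [← Finset.univ_sigma_univ, Finset.prod_sigma]
    refine Finset.prod_congr rfl fun h _ => ?_
    rw [Finset.prod_ite_eq' Finset.univ (prefixOf τ h)
      (fun pre => detOf d h pre (τ.2 h))]
    simp
  have step2 : ∀ d : Idx S A H → A,
      ((∏ i : Idx S A H, π i.1 i.2 (d i)) *
        ∏ h : Fin H, detOf d h (prefixOf τ h) (τ.2 h))
      = ∏ i : Idx S A H, (π i.1 i.2 (d i) *
          (if i.2 = prefixOf τ i.1 then detOf d i.1 i.2 (τ.2 i.1) else 1)) := by
    intro d
    rw [step1 d, Finset.prod_mul_distrib]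
  calc ∑ d : Idx S A H → A, (∏ i : Idx S A H, π i.1 i.2 (d i)) *
        (∏ h : Fin H, detOf d h (prefixOf τ h) (τ.2 h))
      = ∑ d : Idx S A H → A, ∏ i : Idx S A H, (π i.1 i.2 (d i) *
          (if i.2 = prefixOf τ i.1 then (if τ.2 i.1 = d i then 1 else 0) else 1)) := by
        refine Finset.sum_congr rfl fun d _ => ?_
        rw [step2 d]
        refine Finset.prod_congr rfl fun i _ => ?_
        rcases i with ⟨h, pre⟩
        rfl
    _ = ∏ i : Idx S A H, ∑ a : A, (π i.1 i.2 a *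
          (if i.2 = prefixOf τ i.1 then (if τ.2 i.1 = a then 1 else 0) else 1)) := by
        rw [Finset.prod_univ_sum (fun _ : Idx S A H => (Finset.univ : Finset A)),
          Fintype.piFinset_univ]
    _ = ∏ i : Idx S A H, (if i.2 = prefixOf τ i.1 then π i.1 i.2 (τ.2 i.1) else 1) := by
        refine Finset.prod_congr rfl fun i _ => ?_
        by_cases hc : i.2 = prefixOf τ i.1 <;> simp [hc, mul_ite, Finset.sum_ite_eq, hπ1]
    _ = ∏ h : Fin H, π h (prefixOf τ h) (τ.2 h) := by
        rw [← Finset.univ_sigma_univ, Finset.prod_sigma]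
        refine Finset.prod_congr rfl fun h _ => ?_
        rw [Finset.prod_ite_eq' Finset.univ (prefixOf τ h)
          (fun pre => π h pre (τ.2 h))]
        simp

lemma traj_decomp (ρ : S → ℝ) (P : Fin H → S → A → S → ℝ)
    (π : HistPolicy S A H) (hπ1 : ∀ h pre, ∑ a : A, π h pre a = 1) (τ : Traj S A H) :
    trajProbHist ρ P π τ
      = ∑ d : Idx S A H → A, (∏ i : Idx S A H, π i.1 i.2 (d i)) *
          trajProbHist ρ P (detOf d) τ := by
  unfold trajProbHist
  have hsplit : ∀ σ : HistPolicy S A H,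
      (∏ h : Fin H, σ h (prefixOf τ h) (τ.2 h) * P h (τ.1 h.castSucc) (τ.2 h) (τ.1 h.succ))
      = (∏ h : Fin H, σ h (prefixOf τ h) (τ.2 h)) *
        ∏ h : Fin H, P h (τ.1 h.castSucc) (τ.2 h) (τ.1 h.succ) :=
    fun σ => Finset.prod_mul_distrib
  rw [hsplit]
  calc ρ (τ.1 0) * ((∏ h : Fin H, π h (prefixOf τ h) (τ.2 h)) *
        ∏ h : Fin H, P h (τ.1 h.castSucc) (τ.2 h) (τ.1 h.succ))
      = ρ (τ.1 0) * ((∑ d : Idx S A H → A, (∏ i : Idx S A H, π i.1 i.2 (d i)) *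
          (∏ h : Fin H, detOf d h (prefixOf τ h) (τ.2 h))) *
        ∏ h : Fin H, P h (τ.1 h.castSucc) (τ.2 h) (τ.1 h.succ)) := by
        rw [key_decomp π hπ1 τ]
    _ = ∑ d : Idx S A H → A, (∏ i : Idx S A H, π i.1 i.2 (d i)) *
          (ρ (τ.1 0) * (∏ h : Fin H, detOf d h (prefixOf τ h) (τ.2 h) *
            P h (τ.1 h.castSucc) (τ.2 h) (τ.1 h.succ))) := by
        rw [Finset.sum_mul, Finset.mul_sum]
        refine Finset.sum_congr rfl fun d _ => ?_
        rw [hsplit (detOf d)]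
        ring

lemma Jobj_decomp_s3 (ρ : S → ℝ) (P : Fin H → S → A → S → ℝ)
    (F : Finset (Fin (H + 1) × S) → ℝ)
    (π : HistPolicy S A H) (hπ1 : ∀ h pre, ∑ a : A, π h pre a = 1) :
    JobjHist ρ P F π
      = ∑ d : Idx S A H → A, (∏ i : Idx S A H, π i.1 i.2 (d i)) *
          JobjHist ρ P F (detOf d) := by
  unfold JobjHist
  simp_rw [traj_decomp ρ P π hπ1, Finset.sum_mul, mul_assoc]
  rw [Finset.sum_comm]
  simp_rw [← Finset.mul_sum]

end AuxDet

/-- For every finite-horizon MDP and every set function `F`, among the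
history-dependent policies there is an optimal one that is deterministic. -/
theorem exists_optimal_deterministic_history_policy
    (S A : Type) [Fintype S] [Fintype A] [DecidableEq S] [Nonempty S] [Nonempty A]
    (H : ℕ) (hH : 1 ≤ H)
    (ρ : S → ℝ) (hρ0 : ∀ s, 0 ≤ ρ s) (hρ1 : ∑ s : S, ρ s = 1)
    (P : Fin H → S → A → S → ℝ)
    (hP0 : ∀ h s a s', 0 ≤ P h s a s') (hP1 : ∀ h s a, ∑ s' : S, P h s a s' = 1)
    (F : Finset (Fin (H + 1) × S) → ℝ) :
    ∃ πstar : HistPolicy S A H, IsDetHistPolicy πstar ∧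
      ∀ π : HistPolicy S A H, IsHistPolicy π → JobjHist ρ P F π ≤ JobjHist ρ P F πstar := by
  classical
  obtain ⟨dstar, hdstar⟩ :=
    Finite.exists_max (fun d : Idx S A H → A => JobjHist ρ P F (detOf d))
  refine ⟨detOf dstar, detOf_isDet dstar, fun π hπ => ?_⟩
  rw [Jobj_decomp_s3 ρ P F π hπ.2]
  calc ∑ d : Idx S A H → A, (∏ i : Idx S A H, π i.1 i.2 (d i)) *
        JobjHist ρ P F (detOf d)
      ≤ ∑ d : Idx S A H → A, (∏ i : Idx S A H, π i.1 i.2 (d i)) *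
        JobjHist ρ P F (detOf dstar) := by
        refine Finset.sum_le_sum fun d _ => ?_
        exact mul_le_mul_of_nonneg_left (hdstar d)
          (Finset.prod_nonneg fun i _ => hπ.1 i.1 i.2 (d i))
    _ = JobjHist ρ P F (detOf dstar) := by
        rw [← Finset.sum_mul, sum_weights π hπ.2, one_mul]
end

section
/- Score-function policy gradient identity: under the policy parameterization hypotheses (each coordinate map θ ↦ π θ h s' a is Fréchet-differentiable at θ₀ with derivative D h s' a, and π θ₀ h s' a > 0 for all h, s', a), the map θ ↦ J(θ) is Fréchet-differentiable at θ₀ with derivative equal to ∑_τ f(τ; π θ₀) · F(τ) · ∑_{h=0}^{H−1} (π θ₀ h (s h) (a h))⁻¹ • D h (s h) (a h), where the sum ranges over all trajectories τ = (s, a). -/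
open Finset

variable {S A : Type} {H : ℕ}

/-!
The probability of a trajectory is a product of policy entries times factors (initial
distribution, transitions) that do not depend on `θ`. Where all policy entries are nonzero,
the derivative of a product is the product times the sum of the logarithmic derivatives of its
factors; summing over the finitely many trajectories gives the score-function formula.
-/

section LogDeriv

variable {𝕜 E ι : Type*} [NontriviallyNormedField 𝕜] [NormedAddCommGroup E] [NormedSpace 𝕜 E]

theorem HasFDerivAt.finsetProd_of_ne_zero [DecidableEq ι] {u : Finset ι} {f : ι → E → 𝕜}
    {f' : ι → E →L[𝕜] 𝕜} {x : E} (hf : ∀ i ∈ u, HasFDerivAt (f i) (f' i) x)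
    (hf0 : ∀ i ∈ u, f i x ≠ 0) :
    HasFDerivAt (fun y => ∏ i ∈ u, f i y) ((∏ i ∈ u, f i x) • ∑ i ∈ u, (f i x)⁻¹ • f' i) x := by
  refine (HasFDerivAt.finsetProd hf).congr_fderiv ?_
  rw [Finset.smul_sum]
  refine Finset.sum_congr rfl fun i hi => ?_
  rw [smul_smul, ← Finset.mul_prod_erase u (f · x) hi, mul_right_comm, mul_inv_cancel₀ (hf0 i hi),
    one_mul]

end LogDeriv

variable {E : Type*} [NormedAddCommGroup E] [NormedSpace ℝ E]

theorem trajProb_eq_prod_mul (ρ : S → ℝ) (P : Fin H → S → A → S → ℝ)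
    (π : Fin H → S → A → ℝ) (τ : Traj S A H) :
    trajProb ρ P π τ = (∏ h : Fin H, π h (τ.1 h.castSucc) (τ.2 h)) *
      (ρ (τ.1 0) * ∏ h : Fin H, P h (τ.1 h.castSucc) (τ.2 h) (τ.1 h.succ)) := by
  rw [trajProb, Finset.prod_mul_distrib]
  ring

theorem hasFDerivAt_trajProb (ρ : S → ℝ) (P : Fin H → S → A → S → ℝ)
    {π : E → Fin H → S → A → ℝ} {θ₀ : E} {D : Fin H → S → A → (E →L[ℝ] ℝ)}
    (hdiff : ∀ h s a, HasFDerivAt (fun θ => π θ h s a) (D h s a) θ₀)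
    (hπ0 : ∀ h s a, π θ₀ h s a ≠ 0) (τ : Traj S A H) :
    HasFDerivAt (fun θ => trajProb ρ P (π θ) τ)
      (trajProb ρ P (π θ₀) τ •
        ∑ h : Fin H, (π θ₀ h (τ.1 h.castSucc) (τ.2 h))⁻¹ • D h (τ.1 h.castSucc) (τ.2 h)) θ₀ := by
  simp only [trajProb_eq_prod_mul]
  have hprod := HasFDerivAt.finsetProd_of_ne_zero (u := Finset.univ)
    (fun h _ => hdiff h (τ.1 h.castSucc) (τ.2 h)) (fun h _ => hπ0 h (τ.1 h.castSucc) (τ.2 h))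
  refine (hprod.mul_const _).congr_fderiv ?_
  rw [smul_smul, mul_comm]

theorem hasFDerivAt_Jobj [Fintype S] [Fintype A] [DecidableEq S] (ρ : S → ℝ)
    (P : Fin H → S → A → S → ℝ) (F : Finset (Fin (H + 1) × S) → ℝ)
    {π : E → Fin H → S → A → ℝ} {θ₀ : E} {D : Fin H → S → A → (E →L[ℝ] ℝ)}
    (hdiff : ∀ h s a, HasFDerivAt (fun θ => π θ h s a) (D h s a) θ₀)
    (hπ0 : ∀ h s a, π θ₀ h s a ≠ 0) :
    HasFDerivAt (fun θ => Jobj ρ P F (π θ))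
      (∑ τ : Traj S A H,
        (trajProb ρ P (π θ₀) τ * F (visitedAll τ)) •
          ∑ h : Fin H,
            (π θ₀ h (τ.1 h.castSucc) (τ.2 h))⁻¹ • D h (τ.1 h.castSucc) (τ.2 h)) θ₀ := by
  refine (HasFDerivAt.fun_sum fun τ _ =>
    (hasFDerivAt_trajProb ρ P hdiff hπ0 τ).mul_const (F (visitedAll τ))).congr_fderiv ?_
  refine Finset.sum_congr rfl fun τ _ => ?_
  rw [smul_smul, mul_comm]

theorem score_function_policy_gradient_general
    (S A : Type) [Fintype S] [Fintype A] [DecidableEq S]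
    (H : ℕ)
    (ρ : S → ℝ)
    (P : Fin H → S → A → S → ℝ)
    (F : Finset (Fin (H + 1) × S) → ℝ)
    (d : ℕ) (π : (Fin d → ℝ) → Fin H → S → A → ℝ) (θ₀ : Fin d → ℝ)
    (D : Fin H → S → A → ((Fin d → ℝ) →L[ℝ] ℝ))
    (hdiff : ∀ h s a, HasFDerivAt (fun θ => π θ h s a) (D h s a) θ₀)
    (hpos : ∀ h s a, 0 < π θ₀ h s a) :
    HasFDerivAt (fun θ => Jobj ρ P F (π θ))
      (∑ τ : Traj S A H,
        (trajProb ρ P (π θ₀) τ * F (visitedAll τ)) •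
          ∑ h : Fin H,
            (π θ₀ h (τ.1 h.castSucc) (τ.2 h))⁻¹ • D h (τ.1 h.castSucc) (τ.2 h))
      θ₀ :=
  hasFDerivAt_Jobj ρ P F hdiff fun h s a => (hpos h s a).ne'

/-- Score-function policy gradient identity: the objective
`θ ↦ J(θ)` is Fréchet-differentiable at `θ₀` with derivative
`∑_τ f(τ; π θ₀) · F(τ) · ∑_h (π θ₀ h (s h) (a h))⁻¹ • D h (s h) (a h)`. -/
theorem score_function_policy_gradient
    (S A : Type) [Fintype S] [Fintype A] [DecidableEq S] [Nonempty S] [Nonempty A]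
    (H : ℕ) (hH : 1 ≤ H)
    (ρ : S → ℝ) (hρ0 : ∀ s, 0 ≤ ρ s) (hρ1 : ∑ s : S, ρ s = 1)
    (P : Fin H → S → A → S → ℝ)
    (hP0 : ∀ h s a s', 0 ≤ P h s a s') (hP1 : ∀ h s a, ∑ s' : S, P h s a s' = 1)
    (F : Finset (Fin (H + 1) × S) → ℝ)
    (d : ℕ) (π : (Fin d → ℝ) → Fin H → S → A → ℝ) (θ₀ : Fin d → ℝ)
    (D : Fin H → S → A → ((Fin d → ℝ) →L[ℝ] ℝ))
    (hdiff : ∀ h s a, HasFDerivAt (fun θ => π θ h s a) (D h s a) θ₀)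
    (hpos : ∀ h s a, 0 < π θ₀ h s a) :
    HasFDerivAt (fun θ => Jobj ρ P F (π θ))
      (∑ τ : Traj S A H,
        (trajProb ρ P (π θ₀) τ * F (visitedAll τ)) •
          ∑ h : Fin H,
            (π θ₀ h (τ.1 h.castSucc) (τ.2 h))⁻¹ • D h (τ.1 h.castSucc) (τ.2 h))
      θ₀ :=
  score_function_policy_gradient_general S A H ρ P F d π θ₀ D hdiff hpos
end

section
/- Baseline invariance: under the policy parameterization hypotheses, and assuming in addition that ∑_{a ∈ A} π θ h s' a = 1 for every θ ∈ ℝ^d, h, s', the following holds for every step i : Fin H and every function b assigning a real number to each trajectory prefix ((s 0, a 0), …, (s (i−1), a (i−1)), s i): ∑_τ f(τ; π θ₀) · b(prefix of τ up to step i) · (π θ₀ i (s i) (a i))⁻¹ • D i (s i) (a i) = 0 as an element of ℝ^d →L[ℝ] ℝ, where the sum ranges over all trajectories τ = (s, a). -/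
open Finset

variable {S A : Type} {H : ℕ}

/-!
Summing out the future of a trajectory after step `i + 1` leaves mass one, because the
transition weights `π h s a * P h s a s'` of the underlying Markov chain sum to one. The
baseline and the weight of the prefix only see the history up to `s i`, so they factor out of
the remaining sum over `a i` and `s (i + 1)`, which is
`∑ₐ (∑ₛ' π a * P a s') • (π a)⁻¹ • D a = ∑ₐ D a`: the derivative at `θ₀` of the constant
`θ ↦ ∑ₐ π θ i s a = 1`, hence zero.
-/

namespace Traj

def cons (s : S) (a : A) (τ : Traj S A H) : Traj S A (H + 1) :=
  (Fin.cons s τ.1, Fin.cons a τ.2)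

@[simp]
lemma cons_fst_zero (s : S) (a : A) (τ : Traj S A H) : (cons s a τ).1 0 = s := rfl

@[simp]
lemma cons_fst_succ (s : S) (a : A) (τ : Traj S A H) (j : Fin (H + 1)) :
    (cons s a τ).1 j.succ = τ.1 j := rfl

@[simp]
lemma cons_snd_zero (s : S) (a : A) (τ : Traj S A H) : (cons s a τ).2 0 = a := rfl

@[simp]
lemma cons_snd_succ (s : S) (a : A) (τ : Traj S A H) (j : Fin H) :
    (cons s a τ).2 j.succ = τ.2 j := rfl

variable [Fintype S] [Fintype A] {M : Type*} [AddCommMonoid M]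

lemma sum_zero (f : Traj S A 0 → M) : ∑ τ, f τ = ∑ s, f (fun _ => s, Fin.elim0) := by
  rw [Fintype.sum_prod_type]
  refine Fintype.sum_equiv (Equiv.funUnique (Fin 1) S) _ _ fun t => ?_
  rw [Fintype.sum_unique]
  congr 2
  exact funext fun l => congrArg t (Subsingleton.elim l 0)

lemma sum_succ (f : Traj S A (H + 1) → M) :
    ∑ τ, f τ = ∑ s, ∑ a, ∑ τ : Traj S A H, f (cons s a τ) := by
  let e : S × A × Traj S A H ≃ Traj S A (H + 1) :=
    (Equiv.prodAssoc S A _).symm.trans <| (Equiv.prodProdProdComm _ _ _ _).trans <|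
      Equiv.prodCongr (Fin.consEquiv fun _ => S) (Fin.consEquiv fun _ => A)
  rw [← Fintype.sum_equiv e (fun x => f (cons x.1 x.2.1 x.2.2)) f fun _ => rfl]
  simp only [Fintype.sum_prod_type]

end Traj

-- The ascription keeps the type of `prefixOf τ 0` syntactically, so that the lemma rewrites.
lemma prefixOf_zero (τ : Traj S A (H + 1)) :
    prefixOf τ 0 = ((Fin.elim0, τ.1 0) : (Fin (0 : Fin (H + 1)).1 → S × A) × S) :=
  Prod.ext (funext fun l => l.elim0) rfl

lemma prefixOf_cons_succ (s : S) (a : A) (τ : Traj S A H) (j : Fin H) :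
    prefixOf (Traj.cons s a τ) j.succ =
      (Fin.cons (s, a) (prefixOf τ j).1, (prefixOf τ j).2) := by
  refine Prod.ext (funext fun l => ?_) rfl
  induction l using Fin.cases <;> rfl

def chainWeight (W : Fin H → S → A → S → ℝ) (τ : Traj S A H) : ℝ :=
  ∏ h, W h (τ.1 h.castSucc) (τ.2 h) (τ.1 h.succ)

lemma chainWeight_cons (W : Fin (H + 1) → S → A → S → ℝ) (s : S) (a : A) (τ : Traj S A H) :
    chainWeight W (Traj.cons s a τ) = W 0 s a (τ.1 0) * chainWeight (fun h => W h.succ) τ := by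
  simp only [chainWeight, Fin.prod_univ_succ, ← Fin.succ_castSucc, Traj.cons_fst_succ,
    Traj.cons_snd_succ]
  rfl

section

variable [Fintype S] [Fintype A]

lemma sum_mul_chainWeight (W : Fin H → S → A → S → ℝ) (hW : ∀ h s, ∑ a, ∑ s', W h s a s' = 1)
    (μ : S → ℝ) : ∑ τ : Traj S A H, μ (τ.1 0) * chainWeight W τ = ∑ s, μ s := by
  induction H generalizing μ with
  | zero => simp [Traj.sum_zero, chainWeight]
  | succ n ih =>
    calc ∑ τ : Traj S A (n + 1), μ (τ.1 0) * chainWeight W τ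
        = ∑ s, ∑ a, ∑ τ : Traj S A n,
            (fun s' => μ s * W 0 s a s') (τ.1 0) * chainWeight (fun h => W h.succ) τ := by
          simp only [Traj.sum_succ, chainWeight_cons, Traj.cons_fst_zero, mul_assoc]
      _ = ∑ s, μ s * ∑ a, ∑ s', W 0 s a s' := by
          refine sum_congr rfl fun s _ => ?_
          rw [mul_sum]
          exact sum_congr rfl fun a _ => (ih _ (fun h => hW h.succ) _).trans (mul_sum _ _ _).symm
      _ = ∑ s, μ s := by simp only [hW, mul_one]

lemma sum_mul_chainWeight_mul_smul_eq_zero {M : Type*} [AddCommMonoid M] [Module ℝ M]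
    (W : Fin H → S → A → S → ℝ) (hW : ∀ h s, ∑ a, ∑ s', W h s a s' = 1) (i : Fin H)
    (E : S → A → M) (hE : ∀ s, ∑ a, (∑ s', W i s a s') • E s a = 0)
    (μ : S → ℝ) (b : (Fin i.1 → S × A) × S → ℝ) :
    ∑ τ : Traj S A H,
      (μ (τ.1 0) * chainWeight W τ * b (prefixOf τ i)) • E (τ.1 i.castSucc) (τ.2 i) = 0 := by
  induction H generalizing μ with
  | zero => exact i.elim0
  | succ n ih =>
    induction i using Fin.cases with
    | zero =>
      calc _ = ∑ s, (μ s * b (Fin.elim0, s)) • ∑ a,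
              (∑ τ : Traj S A n, W 0 s a (τ.1 0) * chainWeight (fun h => W h.succ) τ) • E s a := by
            simp only [Traj.sum_succ, prefixOf_zero, chainWeight_cons, Fin.castSucc_zero,
              Traj.cons_fst_zero, Traj.cons_snd_zero, smul_sum, sum_smul, smul_smul]
            refine sum_congr rfl fun _ _ => sum_congr rfl fun _ _ => sum_congr rfl fun _ _ => ?_
            rw [mul_right_comm]
        _ = 0 := by
            simp only [sum_mul_chainWeight _ (fun h => hW h.succ), hE, smul_zero, sum_const_zero]
    | succ j =>
      rw [Traj.sum_succ]
      refine sum_eq_zero fun s _ => sum_eq_zero fun a _ => ?_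
      refine Eq.trans ?_ (ih (fun h => W h.succ) (fun h => hW h.succ) j hE
        (fun s' => μ s * W 0 s a s') fun p => b (Fin.cons (s, a) p.1, p.2))
      refine sum_congr rfl fun τ _ => ?_
      rw [prefixOf_cons_succ, chainWeight_cons, ← Fin.succ_castSucc, Traj.cons_fst_succ,
        Traj.cons_snd_succ, Traj.cons_fst_zero]
      simp only [mul_assoc]

end

lemma HasFDerivAt.sum_eq_zero_of_sum_eq_const {ι 𝕜 E F : Type*} [Fintype ι]
    [NontriviallyNormedField 𝕜] [NormedAddCommGroup E] [NormedSpace 𝕜 E]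
    [NormedAddCommGroup F] [NormedSpace 𝕜 F] {f : ι → E → F} {f' : ι → E →L[𝕜] F} {x : E}
    {c : F} (hf : ∀ i, HasFDerivAt (f i) (f' i) x) (hc : ∀ y, ∑ i, f i y = c) :
    ∑ i, f' i = 0 := by
  have hsum : HasFDerivAt (fun y => ∑ i, f i y) (∑ i, f' i) x :=
    HasFDerivAt.fun_sum fun i _ => hf i
  simp only [hc] at hsum
  exact hsum.unique (hasFDerivAt_const c x)

theorem baseline_invariance_general
    (S A : Type) [Fintype S] [Fintype A]
    (H : ℕ)
    (ρ : S → ℝ)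
    (P : Fin H → S → A → S → ℝ)
    (hP1 : ∀ h s a, ∑ s' : S, P h s a s' = 1)
    (d : ℕ) (π : (Fin d → ℝ) → Fin H → S → A → ℝ) (θ₀ : Fin d → ℝ)
    (D : Fin H → S → A → ((Fin d → ℝ) →L[ℝ] ℝ))
    (hdiff : ∀ h s a, HasFDerivAt (fun θ => π θ h s a) (D h s a) θ₀)
    (hpos : ∀ h s a, 0 < π θ₀ h s a)
    (hsum : ∀ (θ : Fin d → ℝ) h s', ∑ a : A, π θ h s' a = 1)
    (i : Fin H) (b : ((Fin i.1 → S × A) × S) → ℝ) :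
    ∑ τ : Traj S A H,
      (trajProb ρ P (π θ₀) τ * b (prefixOf τ i)) •
        ((π θ₀ i (τ.1 i.castSucc) (τ.2 i))⁻¹ • D i (τ.1 i.castSucc) (τ.2 i))
      = 0 := by
  have hW : ∀ h s, ∑ a, ∑ s', π θ₀ h s a * P h s a s' = 1 := fun h s => by
    simp only [← mul_sum, hP1, mul_one, hsum]
  -- `trajProb ρ P π τ` is definitionally `ρ (τ.1 0) * chainWeight (π * P) τ`.
  refine sum_mul_chainWeight_mul_smul_eq_zero _ hW i
    (fun s a => (π θ₀ i s a)⁻¹ • D i s a) (fun s => ?_) ρ b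
  have hscore : ∑ a, D i s a = 0 :=
    HasFDerivAt.sum_eq_zero_of_sum_eq_const (hdiff i s) (hsum · i s)
  simpa only [← mul_sum, hP1, mul_one, smul_smul, mul_inv_cancel₀ (hpos i s _).ne', one_smul]
    using hscore

/-- Baseline invariance: for any step `i` and any baseline `b`
depending only on the trajectory prefix up to step `i`, the baseline-weighted
score terms sum to zero. -/
theorem baseline_invariance
    (S A : Type) [Fintype S] [Fintype A] [DecidableEq S] [Nonempty S] [Nonempty A]
    (H : ℕ) (hH : 1 ≤ H)
    (ρ : S → ℝ) (hρ0 : ∀ s, 0 ≤ ρ s) (hρ1 : ∑ s : S, ρ s = 1)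
    (P : Fin H → S → A → S → ℝ)
    (hP0 : ∀ h s a s', 0 ≤ P h s a s') (hP1 : ∀ h s a, ∑ s' : S, P h s a s' = 1)
    (d : ℕ) (π : (Fin d → ℝ) → Fin H → S → A → ℝ) (θ₀ : Fin d → ℝ)
    (D : Fin H → S → A → ((Fin d → ℝ) →L[ℝ] ℝ))
    (hdiff : ∀ h s a, HasFDerivAt (fun θ => π θ h s a) (D h s a) θ₀)
    (hpos : ∀ h s a, 0 < π θ₀ h s a)
    (hsum : ∀ (θ : Fin d → ℝ) h s', ∑ a : A, π θ h s' a = 1)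
    (i : Fin H) (b : ((Fin i.1 → S × A) × S) → ℝ) :
    ∑ τ : Traj S A H,
      (trajProb ρ P (π θ₀) τ * b (prefixOf τ i)) •
        ((π θ₀ i (τ.1 i.castSucc) (τ.2 i))⁻¹ • D i (τ.1 i.castSucc) (τ.2 i))
      = 0 :=
  baseline_invariance_general S A H ρ P hP1 d π θ₀ D hdiff hpos hsum i b
end

section
/- Gradient sandwich between the submodular and modular objectives: assume F is monotone, submodular, F ∅ = 0, and F has curvature c ∈ [0,1]. For an arbitrary table p : Fin H → S → A → ℝ define f(τ; p), J(p), and H_m(p) by the product-sum formulas (regardless of whether p is a probability table); these are polynomial functions of the entries of p. Then for every entrywise nonnegative table p and every coordinate (h, s', a), the partial derivatives satisfy ∂H_m/∂p_{h,s',a}(p) ≥ ∂J/∂p_{h,s',a}(p) ≥ (1 − c) · ∂H_m/∂p_{h,s',a}(p). -/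
open Finset

variable {S A : Type} {H : ℕ}

section Aux

variable {α β : Type*} [DecidableEq α] [DecidableEq β]

lemma aux_single_nonneg (F : Finset β → ℝ) (hF0 : F ∅ = 0)
    (hmono : ∀ A B : Finset β, A ⊆ B → F A ≤ F B) (x : β) : 0 ≤ F {x} :=
  hF0 ▸ hmono ∅ {x} (Finset.empty_subset _)

lemma aux_sub (F : Finset β → ℝ) (hF0 : F ∅ = 0)
    (hsub : ∀ A B : Finset β, A ⊆ B → ∀ x ∉ B,
      F (insert x B) - F B ≤ F (insert x A) - F A)
    (g : α → β) (hg : Function.Injective g) (T : Finset α) :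
    F (T.image g) ≤ ∑ l ∈ T, F {g l} := by
  induction T using Finset.induction with
  | empty => simp [hF0]
  | @insert l T hl ih =>
    rw [Finset.image_insert, Finset.sum_insert hl]
    have hgl : g l ∉ T.image g := by
      intro hmem
      obtain ⟨l', hl', he⟩ := Finset.mem_image.mp hmem
      exact hl (hg he ▸ hl')
    have h1 := hsub ∅ (T.image g) (Finset.empty_subset _) (g l) hgl
    simp only [hF0, sub_zero] at h1
    have : F (insert (g l) ∅) = F {g l} := by norm_num
    linarith

lemma aux_curv (F : Finset β → ℝ) (hF0 : F ∅ = 0) (c : ℝ)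
    (hcurv : ∀ (A : Finset β) (x : β), x ∉ A →
      (1 - c) * F {x} ≤ F (insert x A) - F A)
    (g : α → β) (hg : Function.Injective g) (T : Finset α) :
    (1 - c) * ∑ l ∈ T, F {g l} ≤ F (T.image g) := by
  induction T using Finset.induction with
  | empty => simp [hF0]
  | @insert l T hl ih =>
    rw [Finset.image_insert, Finset.sum_insert hl, mul_add]
    have hgl : g l ∉ T.image g := by
      intro hmem
      obtain ⟨l', hl', he⟩ := Finset.mem_image.mp hmem
      exact hl (hg he ▸ hl')
    have h1 := hcurv (T.image g) (g l) hgl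
    linarith

end Aux



/-- The modular surrogate of a trajectory: `F_m(τ) = ∑_{h=0}^{H} F {(h, s h)}`. -/
def Fmod [DecidableEq S] (F : Finset (Fin (H + 1) × S) → ℝ) (τ : Traj S A H) : ℝ :=
  ∑ h : Fin (H + 1), F {(h, τ.1 h)}

/-- The modular objective `H_m(p) = ∑_τ f(τ; p) · F_m(τ)`. -/
def Hmod [Fintype S] [Fintype A] [DecidableEq S] (ρ : S → ℝ)
    (P : Fin H → S → A → S → ℝ) (F : Finset (Fin (H + 1) × S) → ℝ)
    (p : Fin H → S → A → ℝ) : ℝ :=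
  ∑ τ : Traj S A H, trajProb ρ P p τ * Fmod F τ

/-- The table `p` with the coordinate `(h, s, a)` replaced by `t`. -/
def updTab [DecidableEq S] [DecidableEq A] (p : Fin H → S → A → ℝ)
    (h : Fin H) (s : S) (a : A) (t : ℝ) : Fin H → S → A → ℝ :=
  fun h' s' a' => if h' = h ∧ s' = s ∧ a' = a then t else p h' s' a'

/-- Gradient sandwich between the submodular objective `J` and the
modular objective `H_m`: for every entrywise nonnegative table `p` and every coordinate,
`∂H_m ≥ ∂J ≥ (1 − c) · ∂H_m`. -/
theorem gradient_sandwich_submodular_modular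
    (S A : Type) [Fintype S] [Fintype A] [DecidableEq S] [DecidableEq A]
    [Nonempty S] [Nonempty A]
    (H : ℕ) (hH : 1 ≤ H)
    (ρ : S → ℝ) (hρ0 : ∀ s, 0 ≤ ρ s) (hρ1 : ∑ s : S, ρ s = 1)
    (P : Fin H → S → A → S → ℝ)
    (hP0 : ∀ h s a s', 0 ≤ P h s a s') (hP1 : ∀ h s a, ∑ s' : S, P h s a s' = 1)
    (F : Finset (Fin (H + 1) × S) → ℝ)
    (hF0 : F ∅ = 0)
    (hmono : ∀ A' B : Finset (Fin (H + 1) × S), A' ⊆ B → F A' ≤ F B)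
    (hsub : ∀ A' B : Finset (Fin (H + 1) × S), A' ⊆ B → ∀ x ∉ B,
      F (insert x B) - F B ≤ F (insert x A') - F A')
    (c : ℝ) (hc0 : 0 ≤ c) (hc1 : c ≤ 1)
    (hcurv : ∀ (A' : Finset (Fin (H + 1) × S)) (x : Fin (H + 1) × S), x ∉ A' →
      (1 - c) * F {x} ≤ F (insert x A') - F A') :
    ∀ p : Fin H → S → A → ℝ, (∀ h s a, 0 ≤ p h s a) →
      ∀ (h : Fin H) (s' : S) (a : A),
        deriv (fun t => Jobj ρ P F (updTab p h s' a t)) (p h s' a) ≤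
            deriv (fun t => Hmod ρ P F (updTab p h s' a t)) (p h s' a) ∧
        (1 - c) * deriv (fun t => Hmod ρ P F (updTab p h s' a t)) (p h s' a) ≤
            deriv (fun t => Jobj ρ P F (updTab p h s' a t)) (p h s' a) := by
  intro p hp h s' a
  classical
  -- the constant part of each trajectory's probability w.r.t. the coordinate (h,s',a)
  set K : Traj S A H → ℝ := fun τ =>
    ρ (τ.1 0) * P h (τ.1 h.castSucc) (τ.2 h) (τ.1 h.succ) *
      ∏ h' ∈ Finset.univ.erase h,
        (p h' (τ.1 h'.castSucc) (τ.2 h') *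
          P h' (τ.1 h'.castSucc) (τ.2 h') (τ.1 h'.succ)) with hK_def
  have hK : ∀ τ, 0 ≤ K τ := by
    intro τ
    refine mul_nonneg (mul_nonneg (hρ0 _) (hP0 _ _ _ _)) ?_
    exact Finset.prod_nonneg fun _ _ => mul_nonneg (hp _ _ _) (hP0 _ _ _ _)
  have key : ∀ (t : ℝ) (τ : Traj S A H), trajProb ρ P (updTab p h s' a t) τ =
      (if τ.1 h.castSucc = s' ∧ τ.2 h = a then t else p h (τ.1 h.castSucc) (τ.2 h)) * K τ := by
    intro t τ
    unfold trajProb updTab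
    rw [← Finset.mul_prod_erase (Finset.univ) _ (Finset.mem_univ h)]
    have hrest : ∏ h' ∈ Finset.univ.erase h,
        ((if h' = h ∧ τ.1 h'.castSucc = s' ∧ τ.2 h' = a then t
            else p h' (τ.1 h'.castSucc) (τ.2 h')) *
          P h' (τ.1 h'.castSucc) (τ.2 h') (τ.1 h'.succ)) =
        ∏ h' ∈ Finset.univ.erase h,
        (p h' (τ.1 h'.castSucc) (τ.2 h') *
          P h' (τ.1 h'.castSucc) (τ.2 h') (τ.1 h'.succ)) := by
      refine Finset.prod_congr rfl fun h' hh' => ?_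
      have hne : h' ≠ h := (Finset.mem_erase.mp hh').1
      simp [hne]
    rw [hrest, hK_def]
    by_cases hM : τ.1 h.castSucc = s' ∧ τ.2 h = a
    · rw [if_pos ⟨rfl, hM⟩, if_pos hM]; ring
    · rw [if_neg (by tauto), if_neg hM]; ring
  -- linear form of both objectives
  set DJ : ℝ := ∑ τ : Traj S A H,
    (if τ.1 h.castSucc = s' ∧ τ.2 h = a then K τ * F (visitedAll τ) else 0) with hDJ
  set CJ : ℝ := ∑ τ : Traj S A H,
    (if τ.1 h.castSucc = s' ∧ τ.2 h = a then 0
      else p h (τ.1 h.castSucc) (τ.2 h) * K τ * F (visitedAll τ)) with hCJ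
  set DH : ℝ := ∑ τ : Traj S A H,
    (if τ.1 h.castSucc = s' ∧ τ.2 h = a then K τ * Fmod F τ else 0) with hDH
  set CH : ℝ := ∑ τ : Traj S A H,
    (if τ.1 h.castSucc = s' ∧ τ.2 h = a then 0
      else p h (τ.1 h.castSucc) (τ.2 h) * K τ * Fmod F τ) with hCH
  have Jline : ∀ t : ℝ, Jobj ρ P F (updTab p h s' a t) = t * DJ + CJ := by
    intro t
    unfold Jobj
    simp only [key]
    rw [hDJ, hCJ, Finset.mul_sum, ← Finset.sum_add_distrib]
    refine Finset.sum_congr rfl fun τ _ => ?_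
    by_cases hM : τ.1 h.castSucc = s' ∧ τ.2 h = a
    · simp only [if_pos hM]; ring
    · simp only [if_neg hM]; ring
  have Hline : ∀ t : ℝ, Hmod ρ P F (updTab p h s' a t) = t * DH + CH := by
    intro t
    unfold Hmod
    simp only [key]
    rw [hDH, hCH, Finset.mul_sum, ← Finset.sum_add_distrib]
    refine Finset.sum_congr rfl fun τ _ => ?_
    by_cases hM : τ.1 h.castSucc = s' ∧ τ.2 h = a
    · simp only [if_pos hM]; ring
    · simp only [if_neg hM]; ring
  have dJ : deriv (fun t => Jobj ρ P F (updTab p h s' a t)) (p h s' a) = DJ := by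
    have : (fun t => Jobj ρ P F (updTab p h s' a t)) = fun t => t * DJ + CJ :=
      funext Jline
    rw [this]
    simpa using (((hasDerivAt_id (p h s' a)).mul_const DJ).add_const CJ).deriv
  have dH : deriv (fun t => Hmod ρ P F (updTab p h s' a t)) (p h s' a) = DH := by
    have : (fun t => Hmod ρ P F (updTab p h s' a t)) = fun t => t * DH + CH :=
      funext Hline
    rw [this]
    simpa using (((hasDerivAt_id (p h s' a)).mul_const DH).add_const CH).deriv
  -- pointwise bounds between F and its modular surrogate
  have hginj : ∀ τ : Traj S A H, Function.Injective (fun l : Fin (H + 1) => (l, τ.1 l)) :=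
    fun τ l1 l2 he => congrArg Prod.fst he
  have hFle : ∀ τ : Traj S A H, F (visitedAll τ) ≤ Fmod F τ := by
    intro τ
    have := aux_sub F hF0 hsub (fun l : Fin (H + 1) => (l, τ.1 l)) (hginj τ) Finset.univ
    simpa [visitedAll, Fmod] using this
  have hFge : ∀ τ : Traj S A H, (1 - c) * Fmod F τ ≤ F (visitedAll τ) := by
    intro τ
    have := aux_curv F hF0 c hcurv (fun l : Fin (H + 1) => (l, τ.1 l)) (hginj τ) Finset.univ
    simpa [visitedAll, Fmod] using this
  rw [dJ, dH]
  constructor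
  · refine Finset.sum_le_sum fun τ _ => ?_
    by_cases hM : τ.1 h.castSucc = s' ∧ τ.2 h = a
    · simp only [if_pos hM]
      exact mul_le_mul_of_nonneg_left (hFle τ) (hK τ)
    · simp [hM]
  · rw [Finset.mul_sum]
    refine Finset.sum_le_sum fun τ _ => ?_
    by_cases hM : τ.1 h.castSucc = s' ∧ τ.2 h = a
    · simp only [if_pos hM]
      calc (1 - c) * (K τ * Fmod F τ) = K τ * ((1 - c) * Fmod F τ) := by ring
        _ ≤ K τ * F (visitedAll τ) := mul_le_mul_of_nonneg_left (hFge τ) (hK τ)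
    · simp [hM]
end

section
/- Geometric decay of the greedy covering recursion (Lemma C.2): let k : ℝ with k > exp 1, and let L : ℕ → ℝ with L 0 = k. Suppose n : ℕ is such that for every i < n one has L i > 1 and L (i+1) ≤ L i · (1 − 1 / log (L i)). Then L n ≤ k · exp (−(n : ℝ) / log k). Consequently, if in addition (n : ℝ) > (log k)², then L n < 1. -/
/-- **Lemma C.2.** Geometric decay of the greedy covering recursion:
if `L 0 = k > e` and for all `i < n` we have `L i > 1` and
`L (i+1) ≤ L i · (1 − 1 / log (L i))`, then `L n ≤ k · exp (−n / log k)`;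
consequently, if `n > (log k)²` then `L n < 1`. -/
theorem greedy_covering_recursion_decay
    (k : ℝ) (hk : Real.exp 1 < k)
    (L : ℕ → ℝ) (hL0 : L 0 = k)
    (n : ℕ)
    (hrec : ∀ i < n, 1 < L i ∧ L (i + 1) ≤ L i * (1 - 1 / Real.log (L i))) :
    L n ≤ k * Real.exp (-(n : ℝ) / Real.log k) ∧
      ((n : ℝ) > (Real.log k) ^ 2 → L n < 1) := by
  have hkpos : (0:ℝ) < k := lt_trans (Real.exp_pos 1) hk
  have hlogk : 1 < Real.log k := (Real.lt_log_iff_exp_lt hkpos).2 hk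
  have hlogk0 : (0:ℝ) < Real.log k := by linarith
  have key : ∀ m, m ≤ n → L m ≤ k * Real.exp (-(m:ℝ)/Real.log k) := by
    intro m
    induction m with
    | zero => intro _; simp [hL0]
    | succ m ih =>
      intro hm
      have hmn : m < n := Nat.lt_of_succ_le hm
      obtain ⟨hLm1, hstep⟩ := hrec m hmn
      have ihm := ih (le_of_lt hmn)
      have hlogLm : 0 < Real.log (L m) := Real.log_pos hLm1
      have hLmk : L m ≤ k := by
        have h1 : Real.exp (-(m:ℝ)/Real.log k) ≤ 1 := by
          rw [Real.exp_le_one_iff]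
          apply div_nonpos_of_nonpos_of_nonneg
          · simp [Nat.cast_nonneg]
          · exact le_of_lt hlogk0
        nlinarith
      have hloglog : Real.log (L m) ≤ Real.log k :=
        Real.log_le_log (by linarith) hLmk
      have hfrac : 1 - 1 / Real.log (L m) ≤ Real.exp (-(1/Real.log k)) := by
        have h1 : 1 / Real.log k ≤ 1 / Real.log (L m) :=
          one_div_le_one_div_of_le hlogLm hloglog
        have h2 : -(1/Real.log k) + 1 ≤ Real.exp (-(1/Real.log k)) :=
          Real.add_one_le_exp _
        linarith
      have hLmpos : (0:ℝ) < L m := by linarith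
      calc L (m+1) ≤ L m * (1 - 1 / Real.log (L m)) := hstep
        _ ≤ L m * Real.exp (-(1/Real.log k)) :=
            mul_le_mul_of_nonneg_left hfrac hLmpos.le
        _ ≤ (k * Real.exp (-(m:ℝ)/Real.log k)) * Real.exp (-(1/Real.log k)) :=
            mul_le_mul_of_nonneg_right ihm (Real.exp_pos _).le
        _ = k * Real.exp (-((m:ℕ)+1:ℝ)/Real.log k) := by
            rw [mul_assoc, ← Real.exp_add]
            congr 1
            field_simp
            ring
        _ = k * Real.exp (-((m+1:ℕ):ℝ)/Real.log k) := by push_cast; ring_nf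
  have hmain := key n le_rfl
  refine ⟨hmain, fun hn => ?_⟩
  have h1 : -(n:ℝ)/Real.log k < -Real.log k := by
    rw [div_lt_iff₀ hlogk0]; nlinarith
  have h2 : Real.exp (-(n:ℝ)/Real.log k) < Real.exp (-Real.log k) :=
    Real.exp_lt_exp.2 h1
  have h3 : Real.exp (-Real.log k) = 1/k := by
    rw [Real.exp_neg, Real.exp_log hkpos]; ring
  have : k * Real.exp (-(n:ℝ)/Real.log k) < 1 := by
    rw [h3] at h2
    calc k * Real.exp (-(n:ℝ)/Real.log k) < k * (1/k) :=
          mul_lt_mul_of_pos_left h2 hkpos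
      _ = 1 := by field_simp
  linarith
end

section
/- Monotone single-state improvement: for every finite-horizon MDP, every set function F, every Markovian policy π, every step k : Fin H, and every state s̄ : S, there exists an action ā : A such that the Markovian policy π′ — equal to π everywhere except that π′ k s̄ is the point mass on ā (π′ k s̄ ā = 1 and π′ k s̄ a = 0 for a ≠ ā) — satisfies J(π′) ≥ J(π). -/
open Finset

variable {S A : Type} {H : ℕ}

/-- Monotone single-state improvement: for every Markovian policy `π`,
step `k`, and state `s̄`, there is an action `ā` such that replacing the action
distribution of `π` at `(k, s̄)` by the point mass on `ā` does not decrease the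
objective. -/
theorem single_state_deterministic_improvement
    (S A : Type) [Fintype S] [Fintype A] [DecidableEq S] [DecidableEq A]
    [Nonempty S] [Nonempty A]
    (H : ℕ) (hH : 1 ≤ H)
    (ρ : S → ℝ) (hρ0 : ∀ s, 0 ≤ ρ s) (hρ1 : ∑ s : S, ρ s = 1)
    (P : Fin H → S → A → S → ℝ)
    (hP0 : ∀ h s a s', 0 ≤ P h s a s') (hP1 : ∀ h s a, ∑ s' : S, P h s a s' = 1)
    (F : Finset (Fin (H + 1) × S) → ℝ)
    (π : Fin H → S → A → ℝ) (hπ : IsMarkovPolicy π)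
    (k : Fin H) (sbar : S) :
    ∃ abar : A,
      Jobj ρ P F π ≤
        Jobj ρ P F
          (fun h s => if h = k ∧ s = sbar
            then (fun a => if a = abar then (1 : ℝ) else 0)
            else π h s) := by
  classical
  set J' : (A → ℝ) → ℝ := fun q =>
    Jobj ρ P F (fun h s => if h = k ∧ s = sbar then q else π h s) with hJ'
  have key : ∀ q : A → ℝ, (∑ a : A, q a = 1) →
      J' q = ∑ a : A, q a * J' (fun b => if b = a then (1 : ℝ) else 0) := by
    intro q hq
    simp only [hJ', Jobj]
    simp only [Finset.mul_sum]
    rw [Finset.sum_comm]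
    refine Finset.sum_congr rfl fun τ _ => ?_
    have split : ∀ (π' : Fin H → S → A → ℝ),
        trajProb ρ P π' τ = ρ (τ.1 0) *
          ((π' k (τ.1 k.castSucc) (τ.2 k) *
              P k (τ.1 k.castSucc) (τ.2 k) (τ.1 k.succ)) *
            ∏ h ∈ Finset.univ.erase k,
              π' h (τ.1 h.castSucc) (τ.2 h) *
                P h (τ.1 h.castSucc) (τ.2 h) (τ.1 h.succ)) := by
      intro π'
      unfold trajProb
      rw [← Finset.mul_prod_erase Finset.univ _ (Finset.mem_univ k)]
    have hR : ∀ (f : A → ℝ),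
        (∏ h ∈ Finset.univ.erase k,
          (if h = k ∧ τ.1 h.castSucc = sbar then f else π h (τ.1 h.castSucc)) (τ.2 h) *
            P h (τ.1 h.castSucc) (τ.2 h) (τ.1 h.succ))
        = ∏ h ∈ Finset.univ.erase k,
            π h (τ.1 h.castSucc) (τ.2 h) *
              P h (τ.1 h.castSucc) (τ.2 h) (τ.1 h.succ) := by
      intro f
      refine Finset.prod_congr rfl fun h hh => ?_
      have : h ≠ k := Finset.ne_of_mem_erase hh
      simp [this]
    simp only [split, hR]
    set R := ∏ h ∈ Finset.univ.erase k,
        π h (τ.1 h.castSucc) (τ.2 h) * P h (τ.1 h.castSucc) (τ.2 h) (τ.1 h.succ) with hRdef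
    by_cases hc : τ.1 k.castSucc = sbar
    · simp only [hc, and_self, if_true, if_pos rfl]
      rw [Finset.sum_eq_single (τ.2 k)]
      · simp; ring
      · intro a _ ha
        simp [Ne.symm ha]
      · simp
    · simp only [hc, and_false, if_false]
      rw [← Finset.sum_mul, hq, one_mul]
  have hπeq : (fun h s => if h = k ∧ s = sbar then π k sbar else π h s) = π := by
    funext h s
    by_cases hc : h = k ∧ s = sbar
    · obtain ⟨h1, h2⟩ := hc; subst h1; subst h2; simp
    · simp [hc]
  obtain ⟨abar, -, habar⟩ := Finset.exists_max_image Finset.univ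
    (fun a : A => J' (fun b => if b = a then (1 : ℝ) else 0)) Finset.univ_nonempty
  refine ⟨abar, ?_⟩
  have h1 : Jobj ρ P F π = J' (π k sbar) := (congrArg (Jobj ρ P F) hπeq).symm
  rw [h1, key (π k sbar) (hπ.2 k sbar)]
  calc ∑ a : A, π k sbar a * J' (fun b => if b = a then (1 : ℝ) else 0)
      ≤ ∑ a : A, π k sbar a * J' (fun b => if b = abar then (1 : ℝ) else 0) := by
        refine Finset.sum_le_sum fun a _ => ?_
        exact mul_le_mul_of_nonneg_left (habar a (Finset.mem_univ a)) (hπ.1 k sbar a)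
    _ = J' (fun b => if b = abar then (1 : ℝ) else 0) := by
        rw [← Finset.sum_mul, hπ.2 k sbar, one_mul]
end
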